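/- There exists r with 0 < r < 1 such that, for the holomorphic map b_r : 𝔹² → 𝔹² given by b_r(z₁,z₂) = (2r·z₁·z₂, 0), the kernel (z,w) ↦ (1 − 4r²·z₁·z₂·conj(w₁)·conj(w₂))/(1 − z₁·conj(w₁) − z₂·conj(w₂)) is NOT positive semidefinite on 𝔹². (Thus positivity of the generalized de Branges–Rovnyak kernel K^{b,1} is not necessary for boundedness of the composition operator C_{b_r} on H²_{2,1}.) -/

import Mathlib

open Complex Metric ComplexConjugate
open scoped ComplexOrder

/-!
Test positivity on the four points `(±1/2, ±1/2)` of the ball with the coefficients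
`c = ±1` given by the product of the two signs. Writing `a, b ∈ {±1}` for the products of
the first and of the second signs of two of the points, the pair contributes
`ab (1 - r²ab/4) / (1 - (a + b)/4)`, and each `(a, b)` occurs for four pairs, so the
quadratic form equals `(8 - 14 r²)/3`. This is negative as soon as `r² > 4/7`.
-/

noncomputable section

/-- A kernel `K : X → X → ℂ` is positive semidefinite on a set `S`: for all finite
families of points of `S` and scalars, the associated quadratic form is a
nonnegative real number (using the partial order on `ℂ`). -/
def IsPSDKernelOn {X : Type*} (K : X → X → ℂ) (S : Set X) : Prop :=
  ∀ (n : ℕ) (x : Fin n → X), (∀ i, x i ∈ S) → ∀ c : Fin n → ℂ,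
    0 ≤ ∑ i, ∑ j, c i * conj (c j) * K (x i) (x j)

namespace DeBrangesRovnyak

/-- The kernel `K^{b_r,1}` for `b_r(z₁, z₂) = (2r z₁z₂, 0)`. -/
def kernel (r : ℝ) (z w : EuclideanSpace ℂ (Fin 2)) : ℂ :=
  (1 - 4 * (r : ℂ) ^ 2 * z 0 * z 1 * conj (w 0) * conj (w 1)) /
    (1 - z 0 * conj (w 0) - z 1 * conj (w 1))

def signPoint : Fin 4 → EuclideanSpace ℂ (Fin 2) :=
  ![!₂[1/2, 1/2], !₂[1/2, -(1/2)], !₂[-(1/2), 1/2], !₂[-(1/2), -(1/2)]]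

def signCoeff : Fin 4 → ℂ := ![1, -1, -1, 1]

lemma mem_ball_zero_one_of_norm_sq_add_norm_sq_lt_one {z : EuclideanSpace ℂ (Fin 2)}
    (hz : ‖z 0‖ ^ 2 + ‖z 1‖ ^ 2 < 1) : z ∈ ball (0 : EuclideanSpace ℂ (Fin 2)) 1 := by
  rw [mem_ball_zero_iff, EuclideanSpace.norm_eq, Fin.sum_univ_two, Real.sqrt_lt' one_pos, one_pow]
  exact hz

lemma signPoint_mem_ball (i : Fin 4) : signPoint i ∈ ball (0 : EuclideanSpace ℂ (Fin 2)) 1 := by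
  apply mem_ball_zero_one_of_norm_sq_add_norm_sq_lt_one
  fin_cases i <;> norm_num [signPoint]

lemma quadForm_kernel_signPoint (r : ℝ) :
    ∑ i, ∑ j, signCoeff i * conj (signCoeff j) * kernel r (signPoint i) (signPoint j) =
      ((8 - 14 * r ^ 2) / 3 : ℝ) := by
  simp only [Fin.sum_univ_four, kernel, signPoint, signCoeff, Matrix.cons_val, Matrix.cons_val_zero,
    Matrix.cons_val_one, Matrix.cons_val_fin_one, map_one, map_neg, map_div₀, conj_ofNat, ofReal_div,
    ofReal_sub, ofReal_mul, ofReal_pow, ofReal_ofNat]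
  ring

theorem not_isPSDKernelOn_kernel {r : ℝ} (hr : 4 < 7 * r ^ 2) :
    ¬ IsPSDKernelOn (kernel r) (ball (0 : EuclideanSpace ℂ (Fin 2)) 1) := by
  intro hpsd
  have hform := hpsd 4 signPoint signPoint_mem_ball signCoeff
  rw [quadForm_kernel_signPoint, Complex.zero_le_real] at hform
  linarith

end DeBrangesRovnyak

/-- There is `0 < r < 1` such that for `b_r(z₁,z₂) = (2r·z₁·z₂, 0)` the
generalized de Branges–Rovnyak kernel
`K^{b_r,1}(z,w) = (1 − 4r²·z₁z₂·conj(w₁w₂))/(1 − z₁conj(w₁) − z₂conj(w₂))`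
is not positive semidefinite on the unit ball of `ℂ²`; thus positivity of
`K^{b,1}` is not necessary for boundedness of `C_b` on `H²_{2,1}`. -/
theorem exists_kernel_not_psd_but_bounded_composition :
    ∃ r : ℝ, 0 < r ∧ r < 1 ∧
      ¬ IsPSDKernelOn
        (fun z w : EuclideanSpace ℂ (Fin 2) =>
          (1 - 4 * (r : ℂ) ^ 2 * z 0 * z 1 * conj (w 0) * conj (w 1)) /
            (1 - z 0 * conj (w 0) - z 1 * conj (w 1)))
        (ball (0 : EuclideanSpace ℂ (Fin 2)) 1) :=
  ⟨9 / 10, by norm_num, by norm_num, DeBrangesRovnyak.not_isPSDKernelOn_kernel (by norm_num)⟩
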